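/- arXiv:2210.02955 — 3 statements merged into one kernel-verified Lean document; each statement's English description precedes it below -/
import Mathlib

section
/- (Example 2.2, fractional growth/decay; also the key ODE step for the fractional diffusion Green function.) Let 0 < β < 1 and λ ∈ ℂ. The function y : [0,∞) → ℂ defined by y(t) = E_β(λ·t^β) = ∑_{k=0}^∞ λ^k·t^{βk}/Γ(β·k+1) satisfies y(0) = 1, y is differentiable on (0,∞), and for every t > 0 its Caputo fractional derivative of order β satisfies (1/Γ(1−β)) ∫_0^t (t−τ)^{−β} · y'(τ) dτ = λ · y(t). -/
/-!
Differentiate and integrate the series term by term. Since `Γ(c + 1) = c Γ(c)`, the term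
`t ^ c / Γ(c + 1)` has derivative `t ^ (c - 1) / Γ(c)`, and by the Beta integral
`∫₀ᵗ (t - τ)^(-β) τ^(c - 1) / Γ(c) dτ = Γ(1 - β) t^(c - β) / Γ(c - β + 1)`. With `c = β (k + 1)` the
Caputo derivative therefore maps the `(k + 1)`-st term of `E_β(λ t^β)` to `λ` times the `k`-th one.
Both interchanges are justified by `Γ(βk + 1) ≥ ⌊βk⌋!`, which makes every series involved
dominated by a convergent one, locally uniformly in `t`.
-/

open MeasureTheory

/-- Complex-valued Mittag-Leffler function `t ↦ E_β (λ t^β)`. -/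
noncomputable def mlFun (β : ℝ) (lam : ℂ) (t : ℝ) : ℂ :=
  ∑' k : ℕ, lam ^ k * ((t ^ (β * k) : ℝ) : ℂ) / ((Real.Gamma (β * k + 1) : ℝ) : ℂ)

open Real Filter Topology
open scoped Nat

lemma factorial_floor_le_Gamma_add_one {x : ℝ} (hx : 1 ≤ x) : (⌊x⌋₊ ! : ℝ) ≤ Gamma (x + 1) := by
  have hn : 1 ≤ ⌊x⌋₊ := Nat.le_floor (by simpa using hx)
  rw [← Gamma_nat_eq_factorial]
  refine Gamma_strictMonoOn_Ici.monotoneOn ?_ ?_ ?_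
  · simp only [Set.mem_Ici]; norm_cast; omega
  · simp only [Set.mem_Ici]; linarith
  · linarith [Nat.floor_le (zero_le_one.trans hx)]

lemma tendsto_pow_div_Gamma_mul_add_one {β : ℝ} (hβ : 0 < β) (A : ℝ) :
    Tendsto (fun k : ℕ => A ^ k / Gamma (β * k + 1)) atTop (𝓝 0) := by
  set B := max 1 (|A| ^ β⁻¹)
  have hB : 1 ≤ B := le_max_left _ _
  have hA : |A| ≤ B ^ β :=
    (rpow_inv_rpow (abs_nonneg A) hβ.ne').symm.le.trans
      (rpow_le_rpow (by positivity) (le_max_right _ _) hβ.le)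
  have hβk : Tendsto (fun k : ℕ => β * k) atTop atTop :=
    tendsto_natCast_atTop_atTop.const_mul_atTop hβ
  have hlim : Tendsto (fun k : ℕ => B * (B ^ ⌊β * k⌋₊ / ⌊β * k⌋₊ !)) atTop (𝓝 0) := by
    simpa using ((FloorSemiring.tendsto_pow_div_factorial_atTop B).comp
      (tendsto_nat_floor_atTop.comp hβk)).const_mul B
  refine squeeze_zero_norm' ?_ hlim
  filter_upwards [hβk.eventually_ge_atTop 1] with k hk
  calc ‖A ^ k / Gamma (β * k + 1)‖ = |A| ^ k / Gamma (β * k + 1) := by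
        rw [norm_div, norm_pow, norm_eq_abs, norm_eq_abs,
          abs_of_pos (Gamma_pos_of_pos (by linarith))]
    _ ≤ (B ^ β) ^ k / ⌊β * k⌋₊ ! :=
        div_le_div₀ (by positivity) (pow_le_pow_left₀ (abs_nonneg A) hA k) (by positivity)
          (factorial_floor_le_Gamma_add_one hk)
    _ ≤ B ^ (⌊β * k⌋₊ + 1) / ⌊β * k⌋₊ ! := by
        gcongr
        rw [← rpow_natCast, ← rpow_mul (by positivity), ← rpow_natCast]
        exact rpow_le_rpow_of_exponent_le hB
          (by push_cast; linarith [Nat.lt_floor_add_one (β * k)])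
    _ = B * (B ^ ⌊β * k⌋₊ / ⌊β * k⌋₊ !) := by ring

lemma summable_pow_div_Gamma_mul_add_one {β : ℝ} (hβ : 0 < β) (r : ℝ) :
    Summable fun k : ℕ => r ^ k / Gamma (β * k + 1) := by
  have hbdd : (fun k : ℕ => (2 * r) ^ k / Gamma (β * k + 1)) =O[atTop] (fun _ => (1 : ℝ)) :=
    (tendsto_pow_div_Gamma_mul_add_one hβ (2 * r)).isBigO_one ℝ
  refine summable_of_isBigO_nat summable_geometric_two
    (((Asymptotics.isBigO_refl _ atTop).mul hbdd).congr (fun k => ?_) fun k => mul_one _)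
  rw [mul_pow, mul_div_assoc', ← mul_assoc, ← mul_pow]
  norm_num

/-- Valid for every `x`: where `Gamma` has a pole, Mathlib's `Gamma` is `0`, and so is the entire
function `1 / Γ`. -/
lemma inv_Gamma_eq_div_Gamma_add_one (x : ℝ) : (Gamma x)⁻¹ = x / Gamma (x + 1) := by
  rcases eq_or_ne x 0 with rfl | hx
  · simp
  · rw [Gamma_add_one hx, div_mul_cancel_left₀ hx]

lemma hasDerivAt_rpow_div_Gamma_add_one (c : ℝ) {t : ℝ} (ht : 0 < t) :
    HasDerivAt (fun t => t ^ c / Gamma (c + 1)) (t ^ (c - 1) / Gamma c) t := by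
  refine ((hasDerivAt_rpow_const (p := c) (Or.inl ht.ne')).div_const _).congr_deriv ?_
  rw [div_eq_mul_inv _ (Gamma c), inv_Gamma_eq_div_Gamma_add_one]
  ring

lemma rpow_sub_one_div_Gamma_le {a b c y : ℝ} (ha : 0 < a) (hay : a ≤ y) (hyb : y ≤ b)
    (hc : 0 ≤ c) : y ^ (c - 1) / Gamma c ≤ c * b ^ c / (a * Gamma (c + 1)) := by
  have hy : 0 < y := ha.trans_le hay
  have hΓ : 0 < Gamma (c + 1) := Gamma_pos_of_pos (by linarith)
  calc y ^ (c - 1) / Gamma c = c * y ^ c / (y * Gamma (c + 1)) := by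
        rw [div_eq_mul_inv, inv_Gamma_eq_div_Gamma_add_one, rpow_sub_one hy.ne']
        field_simp
    _ ≤ c * b ^ c / (a * Gamma (c + 1)) := by
        gcongr
        exact mul_nonneg hc (rpow_nonneg (by linarith) c)

lemma integral_rpow_mul_rpow_sub {a b t : ℝ} (ha : 0 < a) (hb : 0 < b) (ht : 0 < t) :
    ∫ τ in (0 : ℝ)..t, τ ^ (a - 1) * (t - τ) ^ (b - 1)
      = Gamma a * Gamma b / Gamma (a + b) * t ^ (a + b - 1) := by
  apply Complex.ofReal_injective
  have hcpow : ∀ τ ∈ Set.uIcc 0 t, ((τ ^ (a - 1) * (t - τ) ^ (b - 1) : ℝ) : ℂ)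
      = (τ : ℂ) ^ ((a : ℂ) - 1) * ((t : ℂ) - τ) ^ ((b : ℂ) - 1) := by
    intro τ hτ
    rw [Set.uIcc_of_le ht.le] at hτ
    rw [Complex.ofReal_mul, Complex.ofReal_cpow hτ.1, Complex.ofReal_cpow (by linarith [hτ.2])]
    push_cast
    rfl
  have hΓ : Complex.Gamma (a + b) ≠ 0 := by
    rw [← Complex.ofReal_add, Complex.Gamma_ofReal]
    exact_mod_cast (Gamma_pos_of_pos (add_pos ha hb)).ne'
  have hB : Complex.betaIntegral a b
      = Complex.Gamma a * Complex.Gamma b / Complex.Gamma (a + b) := by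
    rw [eq_div_iff hΓ, Complex.Gamma_mul_Gamma_eq_betaIntegral (by simpa) (by simpa), mul_comm]
  rw [← intervalIntegral.integral_ofReal, intervalIntegral.integral_congr hcpow,
    Complex.betaIntegral_scaled _ _ ht, hB]
  push_cast
  rw [Complex.ofReal_cpow ht.le, ← Complex.Gamma_ofReal, ← Complex.Gamma_ofReal,
    ← Complex.Gamma_ofReal]
  push_cast
  ring

lemma integral_rpow_sub_mul_rpow_div_Gamma {β c t : ℝ} (hβ : β < 1) (hc : 0 < c) (ht : 0 < t) :
    ∫ τ in (0 : ℝ)..t, (t - τ) ^ (-β) * (τ ^ (c - 1) / Gamma c)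
      = Gamma (1 - β) * (t ^ (c - β) / Gamma (c - β + 1)) := by
  have hΓ : Gamma c ≠ 0 := (Gamma_pos_of_pos hc).ne'
  have hbeta := integral_rpow_mul_rpow_sub hc (sub_pos.2 hβ) ht
  rw [show 1 - β - 1 = -β by ring, show c + (1 - β) - 1 = c - β by ring,
    show c + (1 - β) = c - β + 1 by ring] at hbeta
  calc ∫ τ in (0 : ℝ)..t, (t - τ) ^ (-β) * (τ ^ (c - 1) / Gamma c)
      = (Gamma c)⁻¹ * ∫ τ in (0 : ℝ)..t, τ ^ (c - 1) * (t - τ) ^ (-β) := by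
        rw [← intervalIntegral.integral_const_mul]
        congr 1
        ext τ
        ring
    _ = Gamma (1 - β) * (t ^ (c - β) / Gamma (c - β + 1)) := by
        rw [hbeta]
        field_simp

lemma integrableOn_rpow_sub_mul_rpow_div_Gamma {β c t : ℝ} (hβ : β < 1) (hc : 0 < c)
    (ht : 0 < t) :
    IntegrableOn (fun τ => (t - τ) ^ (-β) * (τ ^ (c - 1) / Gamma c)) (Set.Ioc 0 t) :=
  (intervalIntegral.intervalIntegrable_of_integral_ne_zero <| by
    rw [integral_rpow_sub_mul_rpow_div_Gamma hβ hc ht]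
    have := Gamma_pos_of_pos (sub_pos.2 hβ)
    have := Gamma_pos_of_pos (by linarith : 0 < c - β + 1)
    positivity).1

lemma integral_norm_mul_rpow_sub_mul_rpow_div_Gamma {β c t : ℝ} (z : ℂ) (hβ : β < 1)
    (hc : 0 < c) (ht : 0 < t) :
    ∫ τ in Set.Ioc 0 t, ‖z * (((t - τ) ^ (-β) * (τ ^ (c - 1) / Gamma c) : ℝ) : ℂ)‖
      = ‖z‖ * (Gamma (1 - β) * (t ^ (c - β) / Gamma (c - β + 1))) := by
  have hnonneg : ∀ τ ∈ Set.Ioc 0 t, 0 ≤ (t - τ) ^ (-β) * (τ ^ (c - 1) / Gamma c) := fun τ hτ =>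
    mul_nonneg (rpow_nonneg (by linarith [hτ.2]) _)
      (div_nonneg (rpow_nonneg hτ.1.le _) (Gamma_pos_of_pos hc).le)
  rw [setIntegral_congr_fun measurableSet_Ioc fun τ hτ => by
      rw [norm_mul, Complex.norm_real, norm_eq_abs, abs_of_nonneg (hnonneg τ hτ)],
    integral_const_mul, ← intervalIntegral.integral_of_le ht.le,
    integral_rpow_sub_mul_rpow_div_Gamma hβ hc ht]

section MittagLeffler

variable {β : ℝ} (lam : ℂ)

lemma norm_mlFun_term {t : ℝ} (ht : 0 ≤ t) (hβ : 0 ≤ β) (k : ℕ) :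
    ‖lam ^ k * ((t ^ (β * k) : ℝ) : ℂ) / ((Gamma (β * k + 1) : ℝ) : ℂ)‖
      = (‖lam‖ * t ^ β) ^ k / Gamma (β * k + 1) := by
  have hΓ : 0 < Gamma (β * k + 1) := Gamma_pos_of_pos (by positivity)
  rw [norm_div, norm_mul, norm_pow, Complex.norm_real, Complex.norm_real, norm_eq_abs,
    norm_eq_abs, abs_of_pos hΓ, abs_of_nonneg (by positivity), mul_pow, ← rpow_natCast (t ^ β),
    ← rpow_mul ht]

lemma summable_mlFun_term (hβ : 0 < β) {t : ℝ} (ht : 0 ≤ t) :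
    Summable fun k : ℕ => lam ^ k * ((t ^ (β * k) : ℝ) : ℂ) / ((Gamma (β * k + 1) : ℝ) : ℂ) :=
  .of_norm <| by
    simpa only [norm_mlFun_term lam ht hβ.le] using
      summable_pow_div_Gamma_mul_add_one hβ (‖lam‖ * t ^ β)

lemma hasDerivAt_mlFun_term (k : ℕ) {y : ℝ} (hy : 0 < y) :
    HasDerivAt (fun y => lam ^ k * ((y ^ (β * k) : ℝ) : ℂ) / ((Gamma (β * k + 1) : ℝ) : ℂ))
      (lam ^ k * ((y ^ (β * k - 1) / Gamma (β * k) : ℝ) : ℂ)) y := by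
  have hfun : (fun y => lam ^ k * ((y ^ (β * k) : ℝ) : ℂ) / ((Gamma (β * k + 1) : ℝ) : ℂ))
      = fun y => lam ^ k * ((y ^ (β * k) / Gamma (β * k + 1) : ℝ) : ℂ) := by
    ext z
    push_cast
    ring
  rw [hfun]
  exact (hasDerivAt_rpow_div_Gamma_add_one (β * k) hy).ofReal_comp.const_mul (lam ^ k)

lemma norm_mlFun_deriv_term_le (hβ : 0 < β) (k : ℕ) {a b y : ℝ} (ha : 0 < a) (hay : a ≤ y)
    (hyb : y ≤ b) :
    ‖lam ^ k * ((y ^ (β * k - 1) / Gamma (β * k) : ℝ) : ℂ)‖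
      ≤ β / a * ((2 * ‖lam‖ * b ^ β) ^ k / Gamma (β * k + 1)) := by
  have hb : 0 ≤ b := by linarith
  have hk : β * k ≤ β * 2 ^ k := by gcongr; exact_mod_cast Nat.lt_two_pow_self.le
  rw [norm_mul, norm_pow, Complex.norm_real, norm_eq_abs, abs_of_nonneg (div_nonneg
    (rpow_nonneg (by linarith) _) (Gamma_nonneg_of_nonneg (by positivity)))]
  calc ‖lam‖ ^ k * (y ^ (β * k - 1) / Gamma (β * k))
      ≤ ‖lam‖ ^ k * (β * k * b ^ (β * k) / (a * Gamma (β * k + 1))) :=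
        mul_le_mul_of_nonneg_left (rpow_sub_one_div_Gamma_le ha hay hyb (by positivity))
          (by positivity)
    _ ≤ ‖lam‖ ^ k * (β * 2 ^ k * b ^ (β * k) / (a * Gamma (β * k + 1))) := by gcongr
    _ = β / a * ((2 * ‖lam‖ * b ^ β) ^ k / Gamma (β * k + 1)) := by
        rw [rpow_mul hb, rpow_natCast]
        field_simp
        ring

/-- `λ t^(β-1) E_{β,β}(λ t^β)`. -/
noncomputable def mlFunDeriv (β : ℝ) (lam : ℂ) (t : ℝ) : ℂ :=
  ∑' k : ℕ, lam ^ (k + 1) * ((t ^ (β * (k + 1) - 1) / Gamma (β * (k + 1)) : ℝ) : ℂ)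

lemma hasDerivAt_mlFun (hβ : 0 < β) {t : ℝ} (ht : 0 < t) :
    HasDerivAt (mlFun β lam) (mlFunDeriv β lam t) t := by
  set g' : ℕ → ℝ → ℂ := fun k y => lam ^ k * ((y ^ (β * k - 1) / Gamma (β * k) : ℝ) : ℂ)
  have hbound : ∀ k : ℕ, ∀ y ∈ Set.Ioo (t / 2) (2 * t),
      ‖g' k y‖ ≤ β / (t / 2) * ((2 * ‖lam‖ * (2 * t) ^ β) ^ k / Gamma (β * k + 1)) :=
    fun k y hy => norm_mlFun_deriv_term_le lam hβ k (by positivity) hy.1.le hy.2.le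
  have hsum := (summable_pow_div_Gamma_mul_add_one hβ (2 * ‖lam‖ * (2 * t) ^ β)).mul_left
    (β / (t / 2))
  have hmem : t ∈ Set.Ioo (t / 2) (2 * t) := ⟨by linarith, by linarith⟩
  have h := hasDerivAt_tsum_of_isPreconnected hsum isOpen_Ioo isPreconnected_Ioo
    (fun k y hy => hasDerivAt_mlFun_term lam k (by linarith [hy.1])) hbound hmem
    (summable_mlFun_term lam hβ ht.le) hmem
  have h0 : g' 0 t = 0 := by simp [g', Gamma_zero]
  rw [(Summable.of_norm_bounded hsum fun k => hbound k t hmem).tsum_eq_zero_add, h0,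
    zero_add] at h
  simp only [g', Nat.cast_add, Nat.cast_one] at h
  exact h

lemma caputo_integral_mlFunDeriv (hβ0 : 0 < β) (hβ1 : β < 1) {t : ℝ} (ht : 0 < t) :
    ((1 / Gamma (1 - β) : ℝ) : ℂ) *
        ∫ τ in (0 : ℝ)..t, (((t - τ) ^ (-β) : ℝ) : ℂ) * mlFunDeriv β lam τ
      = lam * mlFun β lam t := by
  set c : ℕ → ℝ := fun k => β * (k + 1)
  have hc : ∀ k, 0 < c k := fun k => by positivity
  have hc_sub : ∀ k : ℕ, c k - β = β * k := fun k => by ring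
  set F : ℕ → ℝ → ℂ := fun k τ =>
    lam ^ (k + 1) * (((t - τ) ^ (-β) * (τ ^ (c k - 1) / Gamma (c k)) : ℝ) : ℂ)
  have hF_integrable : ∀ k : ℕ, Integrable (F k) (volume.restrict (Set.Ioc 0 t)) := fun k =>
    ((integrableOn_rpow_sub_mul_rpow_div_Gamma hβ1 (hc k) ht).ofReal (𝕜 := ℂ)).const_mul _
  have hF_summable : Summable fun k : ℕ => ∫ τ in Set.Ioc 0 t, ‖F k τ‖ := by
    refine ((summable_pow_div_Gamma_mul_add_one hβ0 (‖lam‖ * t ^ β)).mul_left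
      (‖lam‖ * Gamma (1 - β))).congr fun k => ?_
    rw [integral_norm_mul_rpow_sub_mul_rpow_div_Gamma _ hβ1 (hc k) ht, hc_sub, norm_pow,
      mul_pow, ← rpow_natCast (t ^ β), ← rpow_mul ht.le]
    ring
  have hF_tsum : ∀ τ ∈ Set.Ioc 0 t,
      (((t - τ) ^ (-β) : ℝ) : ℂ) * mlFunDeriv β lam τ = ∑' k, F k τ := by
    intro τ _
    rw [mlFunDeriv, ← tsum_mul_left]
    congr 1
    ext k
    simp only [F, c]
    push_cast
    ring
  have hΓ : ((Gamma (1 - β) : ℝ) : ℂ) ≠ 0 :=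
    Complex.ofReal_ne_zero.2 (Gamma_pos_of_pos (by linarith)).ne'
  rw [intervalIntegral.integral_of_le ht.le, setIntegral_congr_fun measurableSet_Ioc hF_tsum,
    ← integral_tsum_of_summable_integral_norm hF_integrable hF_summable, mlFun,
    ← tsum_mul_left, ← tsum_mul_left]
  congr 1
  ext k
  rw [integral_const_mul, integral_complex_ofReal, ← intervalIntegral.integral_of_le ht.le,
    integral_rpow_sub_mul_rpow_div_Gamma hβ1 (hc k) ht, hc_sub]
  push_cast
  field_simp
  ring

lemma mlFun_zero (hβ : β ≠ 0) : mlFun β lam 0 = 1 := by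
  rw [mlFun, tsum_eq_single 0 fun k hk => ?_]
  · simp
  · simp [zero_rpow (mul_ne_zero hβ (Nat.cast_ne_zero.2 hk))]

end MittagLeffler

theorem fractional_growth_decay (β : ℝ) (hβ0 : 0 < β) (hβ1 : β < 1) (lam : ℂ) :
    mlFun β lam 0 = 1 ∧
    DifferentiableOn ℝ (mlFun β lam) (Set.Ioi 0) ∧
    ∀ t > (0 : ℝ),
      ((1 / Real.Gamma (1 - β) : ℝ) : ℂ) *
          ∫ τ in (0 : ℝ)..t, (((t - τ) ^ (-β) : ℝ) : ℂ) * deriv (mlFun β lam) τ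
        = lam * mlFun β lam t := by
  refine ⟨mlFun_zero lam hβ0.ne', fun t ht =>
    (hasDerivAt_mlFun lam hβ0 ht).differentiableAt.differentiableWithinAt, fun t ht => ?_⟩
  rw [← caputo_integral_mlFunDeriv lam hβ0 hβ1 ht]
  congr 1
  refine intervalIntegral.integral_congr_ae (Eventually.of_forall fun τ hτ => ?_)
  rw [Set.uIoc_of_le ht.le] at hτ
  rw [(hasDerivAt_mlFun lam hβ0 hτ.1).deriv]
end

section
/- (Example 2.3.) Let 0 < β < 1 and define the fractional cosine cos_β(t) = ∑_{n=0}^∞ (−1)^n · t^{2nβ}/Γ(2nβ+1) and the fractional sine sin_β(t) = ∑_{n=0}^∞ (−1)^n · t^{(2n+1)β}/Γ((2n+1)β+1) for t ≥ 0. Then cos_β is differentiable on (0,∞) and for every t > 0 its Caputo fractional derivative of order β satisfies (1/Γ(1−β)) ∫_0^t (t−τ)^{−β} · cos_β'(τ) dτ = −sin_β(t). -/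
/-!
With `g_p(t) = t ^ p / Γ(p + 1)` we have `cos_β = ∑ (-1)ⁿ g_{2nβ}` and `sin_β = ∑ (-1)ⁿ g_{(2n+1)β}`.
Termwise `g_p' = g_{p-1}`, and the Beta integral gives
`∫₀ᵗ (t - τ)^(-β) g_{p-1}(τ) dτ = Γ(1 - β) g_{p-β}(t)` for `p > 0`. So the Caputo derivative kills
the constant term `g_0` and maps `g_{2(n+1)β}` to `g_{(2n+1)β}`; with the signs `(-1)ⁿ⁺¹` this sums
to `-sin_β`. Differentiating and integrating termwise is justified because `Γ(c n + d)` eventually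
dominates every geometric sequence.
-/

open MeasureTheory

/-- Fractional cosine `cos_β`. -/
noncomputable def fracCos (β t : ℝ) : ℝ :=
  ∑' n : ℕ, (-1 : ℝ) ^ n * t ^ (2 * n * β) / Real.Gamma (2 * n * β + 1)

/-- Fractional sine `sin_β`. -/
noncomputable def fracSin (β t : ℝ) : ℝ :=
  ∑' n : ℕ, (-1 : ℝ) ^ n * t ^ ((2 * n + 1) * β) / Real.Gamma ((2 * n + 1) * β + 1)

section

open Real Filter Set

lemma rpow_sub_two_mul_exp_neg_le_Gamma {A s : ℝ} (hA : 1 ≤ A) (hs : 2 ≤ s) :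
    A ^ (s - 2) * exp (-A) ≤ Gamma s := by
  set k := ⌊s⌋₊ - 1
  have hfloor : 2 ≤ ⌊s⌋₊ := Nat.le_floor (by exact_mod_cast hs)
  have hk : (k : ℝ) + 1 = ⌊s⌋₊ := by norm_cast; omega
  have hk2 : 2 ≤ (k : ℝ) + 1 := by rw [hk]; exact_mod_cast hfloor
  have hks : (k : ℝ) + 1 ≤ s := hk ▸ Nat.floor_le (by linarith)
  have hsk : s - 2 ≤ k := by linarith [Nat.lt_floor_add_one s]
  calc A ^ (s - 2) * exp (-A) ≤ A ^ k * exp (-A) := by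
        gcongr
        exact_mod_cast rpow_le_rpow_of_exponent_le hA hsk
    _ ≤ k.factorial := by
        rw [exp_neg, ← div_eq_mul_inv, div_le_iff₀ (exp_pos A), ← div_le_iff₀' (by positivity)]
        exact pow_div_factorial_le_exp A (by linarith) k
    _ = Gamma (k + 1) := (Gamma_nat_eq_factorial k).symm
    _ ≤ Gamma s := Gamma_strictMonoOn_Ici.monotoneOn hk2 hs hks

lemma summable_pow_div_Gamma_mul_add {r c : ℝ} (hr : 0 ≤ r) (hc : 0 < c) (d : ℝ) :
    Summable fun n : ℕ => r ^ n / Gamma (c * n + d) := by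
  set A := (r + 1) ^ c⁻¹
  have hA : 1 ≤ A := one_le_rpow (by linarith) (by positivity)
  have hAc : A ^ c = r + 1 := rpow_inv_rpow (by linarith) hc.ne'
  have hlarge : ∀ᶠ n : ℕ in atTop, 2 ≤ c * n + d :=
    (tendsto_atTop_add_const_right _ d
      (tendsto_natCast_atTop_atTop.const_mul_atTop hc)).eventually_ge_atTop 2
  refine ((summable_geometric_of_lt_one (by positivity) ((div_lt_one (by linarith)).2
    (lt_add_one r))).mul_left (exp A * A ^ (2 - d))).of_norm_bounded_eventually_nat ?_
  filter_upwards [hlarge] with n hn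
  have hΓ := rpow_sub_two_mul_exp_neg_le_Gamma hA hn
  rw [add_sub_assoc, rpow_add (by positivity), rpow_mul (by positivity), hAc, rpow_natCast] at hΓ
  rw [norm_div, norm_pow, Real.norm_of_nonneg hr, Real.norm_of_nonneg (by positivity)]
  calc r ^ n / Gamma (c * n + d) ≤ r ^ n / ((r + 1) ^ n * A ^ (d - 2) * exp (-A)) :=
        div_le_div_of_nonneg_left (by positivity) (by positivity) hΓ
    _ = exp A * A ^ (2 - d) * (r / (r + 1)) ^ n := by
        rw [div_pow, exp_neg, rpow_sub (by positivity), rpow_sub (by positivity)]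
        field_simp

lemma integral_rpow_mul_sub_rpow {p q t : ℝ} (hp : 0 < p) (hq : 0 < q) (ht : 0 < t) :
    ∫ x in 0..t, x ^ (p - 1) * (t - x) ^ (q - 1) =
      Gamma p * Gamma q / Gamma (p + q) * t ^ (p + q - 1) := by
  apply Complex.ofReal_injective
  rw [← intervalIntegral.integral_ofReal]
  have hcpow : ∀ x ∈ uIcc 0 t, ((x ^ (p - 1) * (t - x) ^ (q - 1) : ℝ) : ℂ)
      = (x : ℂ) ^ ((p : ℂ) - 1) * ((t : ℂ) - x) ^ ((q : ℂ) - 1) := by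
    intro x hx
    rw [uIcc_of_le ht.le] at hx
    rw [Complex.ofReal_mul, Complex.ofReal_cpow hx.1, Complex.ofReal_cpow (sub_nonneg.2 hx.2)]
    push_cast
    rfl
  rw [intervalIntegral.integral_congr hcpow, Complex.betaIntegral_scaled _ _ ht,
    Complex.betaIntegral_eq_Gamma_mul_div _ _ (by simpa) (by simpa), ← Complex.ofReal_add,
    Complex.Gamma_ofReal, Complex.Gamma_ofReal, Complex.Gamma_ofReal]
  push_cast
  rw [Complex.ofReal_cpow ht.le]
  push_cast
  ring

noncomputable def powDivGamma (p t : ℝ) : ℝ := t ^ p / Gamma (p + 1)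

lemma powDivGamma_nonneg {p t : ℝ} (hp : 0 ≤ p) (ht : 0 ≤ t) : 0 ≤ powDivGamma p t :=
  div_nonneg (rpow_nonneg ht p) (Gamma_nonneg_of_nonneg (by linarith))

lemma powDivGamma_pos {p t : ℝ} (hp : -1 < p) (ht : 0 < t) : 0 < powDivGamma p t :=
  div_pos (rpow_pos_of_pos ht p) (Gamma_pos_of_pos (by linarith))

/-- At `p = 0` both sides vanish: `Gamma 0 = 0` matches the zero of the entire function `1 / Γ`. -/
lemma hasDerivAt_powDivGamma (p : ℝ) {t : ℝ} (ht : t ≠ 0) :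
    HasDerivAt (powDivGamma p) (powDivGamma (p - 1) t) t := by
  rcases eq_or_ne p 0 with rfl | hp
  · have hconst : powDivGamma 0 = fun _ => 1 := by funext; simp [powDivGamma]
    simpa [hconst, powDivGamma, Gamma_zero] using hasDerivAt_const t (1 : ℝ)
  · refine ((hasDerivAt_rpow_const (p := p) (Or.inl ht)).div_const (Gamma (p + 1))).congr_deriv ?_
    rw [powDivGamma, sub_add_cancel, Gamma_add_one hp, mul_div_mul_left _ _ hp]

lemma abs_powDivGamma_sub_one_le {p a b t : ℝ} (hp : 0 ≤ p) (ha : 0 < a) (hat : a ≤ t)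
    (htb : t ≤ b) : |powDivGamma (p - 1) t| ≤ a⁻¹ * b ^ p / Gamma p := by
  have ht : 0 < t := ha.trans_le hat
  have hΓ : 0 ≤ Gamma p := Gamma_nonneg_of_nonneg hp
  rw [powDivGamma, sub_add_cancel, rpow_sub_one ht.ne', abs_of_nonneg (by positivity),
    div_eq_inv_mul (t ^ p)]
  gcongr

lemma summable_powDivGamma_mul_add {c t : ℝ} (hc : 0 < c) (ht : 0 < t) (d : ℝ) :
    Summable fun n : ℕ => powDivGamma (c * n + d) t := by
  refine ((summable_pow_div_Gamma_mul_add (rpow_nonneg ht.le c) hc (d + 1)).mul_left (t ^ d)).congr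
    fun n => ?_
  rw [powDivGamma, rpow_add ht, rpow_mul ht.le, rpow_natCast, add_assoc]
  ring

lemma integral_sub_rpow_mul_powDivGamma {β p t : ℝ} (hβ : β < 1) (hp : 0 < p) (ht : 0 < t) :
    ∫ τ in 0..t, (t - τ) ^ (-β) * powDivGamma (p - 1) τ =
      Gamma (1 - β) * powDivGamma (p - β) t := by
  have hbeta := integral_rpow_mul_sub_rpow hp (sub_pos.2 hβ) ht
  have hΓ : Gamma p ≠ 0 := (Gamma_pos_of_pos hp).ne'
  simp only [powDivGamma, sub_add_cancel, mul_div_assoc', intervalIntegral.integral_div]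
  rw [show p - β + 1 = p + (1 - β) by ring, show p - β = p + (1 - β) - 1 by ring]
  simp only [sub_sub_cancel_left, mul_comm ((t - _) ^ (-β))] at hbeta ⊢
  rw [hbeta]
  field_simp

lemma integral_sub_rpow_mul_tsum_powDivGamma {β t : ℝ} (hβ : β < 1) (ht : 0 < t)
    {a p : ℕ → ℝ} (hp : ∀ n, 0 < p n)
    (hsum : Summable fun n => |a n| * powDivGamma (p n - β) t) :
    ∫ τ in 0..t, (t - τ) ^ (-β) * ∑' n, a n * powDivGamma (p n - 1) τ =
      Gamma (1 - β) * ∑' n, a n * powDivGamma (p n - β) t := by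
  set K : ℕ → ℝ → ℝ := fun n τ => (t - τ) ^ (-β) * powDivGamma (p n - 1) τ
  have hK (n : ℕ) : ∫ τ in Ioc 0 t, K n τ = Gamma (1 - β) * powDivGamma (p n - β) t := by
    rw [← intervalIntegral.integral_of_le ht.le]
    exact integral_sub_rpow_mul_powDivGamma hβ (hp n) ht
  have hK_int (n : ℕ) : IntegrableOn (K n) (Ioc 0 t) := by
    rw [← intervalIntegrable_iff_integrableOn_Ioc_of_le ht.le]
    apply intervalIntegral.intervalIntegrable_of_integral_ne_zero
    rw [intervalIntegral.integral_of_le ht.le, hK]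
    exact (mul_pos (Gamma_pos_of_pos (by linarith)) (powDivGamma_pos (by linarith [hp n]) ht)).ne'
  have hK_nonneg (n : ℕ) : ∀ τ ∈ Ioc 0 t, 0 ≤ K n τ := fun τ hτ =>
    mul_nonneg (rpow_nonneg (sub_nonneg.2 hτ.2) _)
      (div_nonneg (rpow_nonneg hτ.1.le _) (Gamma_nonneg_of_nonneg (by simp [(hp n).le])))
  have hK_norm (n : ℕ) : ∫ τ in Ioc 0 t, ‖a n * K n τ‖ =
      Gamma (1 - β) * (|a n| * powDivGamma (p n - β) t) := by
    rw [setIntegral_congr_fun measurableSet_Ioc fun τ hτ => by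
      rw [norm_mul, Real.norm_eq_abs, Real.norm_of_nonneg (hK_nonneg n τ hτ)],
      integral_const_mul, hK]
    ring
  calc ∫ τ in 0..t, (t - τ) ^ (-β) * ∑' n, a n * powDivGamma (p n - 1) τ
      = ∫ τ in Ioc 0 t, ∑' n, a n * K n τ := by
        rw [intervalIntegral.integral_of_le ht.le]
        refine integral_congr_ae (ae_of_all _ fun τ => ?_)
        simp only [K, ← tsum_mul_left]
        exact tsum_congr fun n => mul_left_comm _ _ _
    _ = ∑' n, ∫ τ in Ioc 0 t, a n * K n τ :=
        (integral_tsum_of_summable_integral_norm (fun n => (hK_int n).const_mul (a n))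
          ((hsum.mul_left _).congr fun n => (hK_norm n).symm)).symm
    _ = Gamma (1 - β) * ∑' n, a n * powDivGamma (p n - β) t := by
        simp only [integral_const_mul, hK, ← tsum_mul_left]
        exact tsum_congr fun n => mul_left_comm _ _ _

lemma fracCos_eq_tsum (β : ℝ) :
    fracCos β = fun t => ∑' n : ℕ, (-1) ^ n * powDivGamma (2 * n * β) t :=
  funext fun _ => tsum_congr fun _ => mul_div_assoc _ _ _

lemma fracSin_eq_tsum (β t : ℝ) :
    fracSin β t = ∑' n : ℕ, (-1) ^ n * powDivGamma ((2 * n + 1) * β) t :=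
  tsum_congr fun _ => mul_div_assoc _ _ _

lemma hasDerivAt_fracCos {β t : ℝ} (hβ : 0 < β) (ht : 0 < t) :
    HasDerivAt (fracCos β) (∑' n : ℕ, (-1) ^ n * powDivGamma (2 * n * β - 1) t) t := by
  have hbound : Summable fun n : ℕ => (t / 2)⁻¹ * (2 * t) ^ (2 * n * β) / Gamma (2 * n * β) := by
    refine ((summable_pow_div_Gamma_mul_add (rpow_nonneg (by positivity : (0 : ℝ) ≤ 2 * t) (2 * β))
      (by positivity : 0 < 2 * β) 0).mul_left (t / 2)⁻¹).congr fun n => ?_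
    rw [mul_div_assoc, add_zero, ← rpow_natCast, ← rpow_mul (by positivity), mul_right_comm]
  rw [fracCos_eq_tsum]
  refine hasDerivAt_tsum_of_isPreconnected (t := Ioo (t / 2) (2 * t)) hbound isOpen_Ioo
    isPreconnected_Ioo (fun n y hy => (hasDerivAt_powDivGamma _ (by linarith [hy.1])).const_mul _)
    (fun n y hy => ?_) (y₀ := t) ⟨by linarith, by linarith⟩
    ((summable_powDivGamma_mul_add (by positivity : 0 < 2 * β) ht 0).of_norm_bounded fun n => ?_)
    ⟨by linarith, by linarith⟩
  · simpa using abs_powDivGamma_sub_one_le (by positivity) (by positivity) hy.1.le hy.2.le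
  · rw [norm_mul, norm_pow, norm_neg, norm_one, one_pow, one_mul, add_zero, mul_right_comm,
      Real.norm_of_nonneg (powDivGamma_nonneg (by positivity) ht.le)]

lemma deriv_fracCos {β t : ℝ} (hβ : 0 < β) (ht : 0 < t) :
    deriv (fracCos β) t = ∑' n : ℕ, -(-1) ^ n * powDivGamma (2 * (n + 1) * β - 1) t := by
  rw [(hasDerivAt_fracCos hβ ht).deriv, ← Nat.succ_injective.tsum_eq]
  · simp [pow_succ]
  · rintro (_ | n) hn
    · simp [powDivGamma, Gamma_zero] at hn
    · exact mem_range_self n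

end

theorem caputo_deriv_fracCos (β : ℝ) (hβ0 : 0 < β) (hβ1 : β < 1) :
    DifferentiableOn ℝ (fracCos β) (Set.Ioi 0) ∧
    ∀ t > (0 : ℝ),
      (1 / Real.Gamma (1 - β)) *
          ∫ τ in (0 : ℝ)..t, (t - τ) ^ (-β) * deriv (fracCos β) τ
        = -fracSin β t := by
  refine ⟨fun t ht => (hasDerivAt_fracCos hβ0 ht).differentiableAt.differentiableWithinAt,
    fun t ht => ?_⟩
  have hshift (n : ℕ) : 2 * ((n : ℝ) + 1) * β - β = (2 * n + 1) * β := by ring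
  have hsum : Summable fun n : ℕ => |-(-1 : ℝ) ^ n| * powDivGamma (2 * (n + 1) * β - β) t := by
    refine (summable_powDivGamma_mul_add (by positivity : 0 < 2 * β) ht β).congr fun n => ?_
    rw [abs_neg, abs_pow, abs_neg, abs_one, one_pow, one_mul, hshift]
    congr 1
    ring
  rw [intervalIntegral.integral_congr_ae (ae_of_all _ fun τ hτ => by
      rw [deriv_fracCos hβ0 (Set.uIoc_of_le ht.le ▸ hτ).1]),
    integral_sub_rpow_mul_tsum_powDivGamma hβ1 ht (fun n => by positivity) hsum, fracSin_eq_tsum]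
  simp only [hshift, neg_mul, tsum_neg]
  field_simp [(Real.Gamma_pos_of_pos (sub_pos.2 hβ1)).ne']
end

section
/- (Corollary 5.2.) Let 0 < β < 1 and t > 0. Let X be a random variable taking values in (0,∞) whose law has density u ↦ (β/u)·g_β(1;u) with respect to Lebesgue measure on (0,∞) (this is the density of the standard one-sided β-stable law). Then the law of Y = t^β · X^{−β} has density y ↦ g_β(y;t) with respect to Lebesgue measure on (0,∞); that is, the pushforward of the measure with density u ↦ (β/u)·g_β(1;u) under the map u ↦ t^β·u^{−β} is the measure with density y ↦ g_β(y;t). -/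
open MeasureTheory

/-- Wright-type density `g_β(x;t)`. -/
noncomputable def gbeta (β x t : ℝ) : ℝ :=
  t ^ (-β) * ∑' k : ℕ, (-x * t ^ (-β)) ^ k / ((k.factorial : ℝ) * Real.Gamma (-β * k + 1 - β))

/-! The substitution `y = t^β u^{-β}` is a smooth bijection of `(0, ∞)`, so the one-dimensional
change of variables formula gives `Y` the density `y ↦ (density of X at u) / |dy/du|`.
What makes the two densities match is the self-similarity of `g_β`: it depends on `(x, t)` only
through `x t^{-β}`, up to the factor `t^{-β}`. -/

open Set

theorem map_withDensity_abs_deriv_mul_comp {s : Set ℝ} {f f' : ℝ → ℝ} (g : ℝ → ENNReal)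
    (hs : MeasurableSet s) (hfm : Measurable f) (hf' : ∀ x ∈ s, HasDerivWithinAt f (f' x) s x)
    (hf : InjOn f s) :
    Measure.map f ((volume.restrict s).withDensity fun x => ENNReal.ofReal |f' x| * g (f x)) =
      (volume.restrict (f '' s)).withDensity g := by
  ext A hA
  have hsA : MeasurableSet (f ⁻¹' A ∩ s) := (hfm hA).inter hs
  rw [Measure.map_apply hfm hA, withDensity_apply _ (hfm hA), withDensity_apply _ hA,
    Measure.restrict_restrict (hfm hA), Measure.restrict_restrict hA, ← image_preimage_inter,
    lintegral_image_eq_lintegral_abs_deriv_mul hsA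
      (fun x hx => (hf' x hx.2).mono inter_subset_right) (hf.mono inter_subset_right)]

theorem bijOn_const_mul_rpow_Ioi {c r : ℝ} (hc : 0 < c) (hr : r ≠ 0) :
    BijOn (fun u : ℝ => c * u ^ r) (Ioi 0) (Ioi 0) := by
  refine ⟨fun u hu => mul_pos hc (Real.rpow_pos_of_pos hu r), ?_, ?_⟩
  · intro u (hu : 0 < u) v (hv : 0 < v) huv
    exact Real.rpow_left_injOn hr hu.le hv.le (mul_left_cancel₀ hc.ne' huv)
  · intro y hy
    refine ⟨(y / c) ^ r⁻¹, Real.rpow_pos_of_pos (div_pos hy hc) _, ?_⟩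
    show c * ((y / c) ^ r⁻¹) ^ r = y
    rw [Real.rpow_inv_rpow (div_pos hy hc).le hr, mul_div_cancel₀ _ hc.ne']

theorem gbeta_eq_rpow_mul_gbeta_one (β x t : ℝ) :
    gbeta β x t = t ^ (-β) * gbeta β (x * t ^ (-β)) 1 := by
  simp only [gbeta, Real.one_rpow, neg_mul, mul_one, one_mul]

theorem abs_deriv_mul_gbeta_eq {β t u : ℝ} (hβ : 0 < β) (ht : 0 < t) (hu : 0 < u) :
    |t ^ β * (-β * u ^ (-β - 1))| * gbeta β (t ^ β * u ^ (-β)) t = β / u * gbeta β 1 u := by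
  have htt : t ^ β * t ^ (-β) = 1 := by rw [← Real.rpow_add ht, add_neg_cancel, Real.rpow_zero]
  have hu_pow : u ^ (-β - 1) = u ^ (-β) / u := by rw [Real.rpow_sub_one hu.ne']
  have habs : |t ^ β * (-β * u ^ (-β - 1))| = t ^ β * β * u ^ (-β - 1) := by
    rw [abs_mul, abs_mul, abs_neg, abs_of_pos (Real.rpow_pos_of_pos ht β), abs_of_pos hβ,
      abs_of_pos (Real.rpow_pos_of_pos hu _), mul_assoc]
  have harg : t ^ β * u ^ (-β) * t ^ (-β) = u ^ (-β) := by rw [mul_right_comm, htt, one_mul]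
  rw [gbeta_eq_rpow_mul_gbeta_one β _ t, gbeta_eq_rpow_mul_gbeta_one β 1 u, habs, hu_pow, harg,
    one_mul]
  linear_combination (u ^ (-β) / u * β * gbeta β (u ^ (-β)) 1) * htt

theorem pushforward_stable_to_gbeta_general (β t : ℝ) (hβ0 : 0 < β) (ht : 0 < t) :
    Measure.map (fun u : ℝ => t ^ β * u ^ (-β))
        ((volume.restrict (Set.Ioi (0 : ℝ))).withDensity
          fun u => ENNReal.ofReal (β / u * gbeta β 1 u))
      = (volume.restrict (Set.Ioi (0 : ℝ))).withDensity
          fun y => ENNReal.ofReal (gbeta β y t) := by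
  have hbij := bijOn_const_mul_rpow_Ioi (Real.rpow_pos_of_pos ht β) (neg_ne_zero.2 hβ0.ne')
  have hderiv : ∀ u ∈ Ioi (0 : ℝ), HasDerivWithinAt (fun u : ℝ => t ^ β * u ^ (-β))
      (t ^ β * (-β * u ^ (-β - 1))) (Ioi 0) u := fun u hu =>
    ((Real.hasDerivAt_rpow_const (Or.inl (ne_of_gt hu))).const_mul _).hasDerivWithinAt
  have hdensity : (fun u => ENNReal.ofReal (β / u * gbeta β 1 u)) =ᵐ[volume.restrict (Ioi 0)]
      fun u => ENNReal.ofReal |t ^ β * (-β * u ^ (-β - 1))| *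
        ENNReal.ofReal (gbeta β (t ^ β * u ^ (-β)) t) :=
    ae_restrict_of_forall_mem measurableSet_Ioi fun u hu => by
      dsimp only
      rw [← ENNReal.ofReal_mul (abs_nonneg _), abs_deriv_mul_gbeta_eq hβ0 ht hu]
  rw [withDensity_congr_ae hdensity,
    map_withDensity_abs_deriv_mul_comp (fun y => ENNReal.ofReal (gbeta β y t)) measurableSet_Ioi
      (by fun_prop) hderiv hbij.injOn,
    hbij.image_eq]

theorem pushforward_stable_to_gbeta (β t : ℝ) (hβ0 : 0 < β) (hβ1 : β < 1) (ht : 0 < t) :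
    Measure.map (fun u : ℝ => t ^ β * u ^ (-β))
        ((volume.restrict (Set.Ioi (0 : ℝ))).withDensity
          fun u => ENNReal.ofReal (β / u * gbeta β 1 u))
      = (volume.restrict (Set.Ioi (0 : ℝ))).withDensity
          fun y => ENNReal.ofReal (gbeta β y t) :=
  pushforward_stable_to_gbeta_general β t hβ0 ht
end
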